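/- arXiv:1106.0435 — 7 statements merged into one kernel-verified Lean document; each statement's English description precedes it below -/
import Mathlib

section
/- Closure of the third potential for cH_V: let u ≠ v and set u₂ = (p-q)/(u-v) - v, v₁ = (p-q)/(u-v) - u. Then (u₂³ - 3p·u₂) - (u³ - 3p·u) = (v₁³ - 3q·v₁) - (v³ - 3q·v). -/
/-! Both u₂ and v₁ are shifts of the same quantity t = (p - q)/(u - v): u₂ = t - v, v₁ = t - u.
The difference of the two sides of the closure identity then factors as
3 (t - u - v) (t (u - v) - (p - q)), which vanishes by the choice of t. -/

theorem third_potential_closure_of_mul_sub_eq {R : Type*} [CommRing R] {p q u v t : R}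
    (ht : t * (u - v) = p - q) :
    ((t - v) ^ 3 - 3 * p * (t - v)) - (u ^ 3 - 3 * p * u) =
      ((t - u) ^ 3 - 3 * q * (t - u)) - (v ^ 3 - 3 * q * v) := by
  linear_combination 3 * (t - u - v) * ht

theorem cHV_third_potential_closure (p q u v : ℂ) (huv : u ≠ v)
    (u₂ v₁ : ℂ) (hu₂ : u₂ = (p - q) / (u - v) - v) (hv₁ : v₁ = (p - q) / (u - v) - u) :
    (u₂ ^ 3 - 3 * p * u₂) - (u ^ 3 - 3 * p * u) = (v₁ ^ 3 - 3 * q * v₁) - (v ^ 3 - 3 * q * v) := by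
  subst hu₂ hv₁
  exact third_potential_closure_of_mul_sub_eq (div_mul_cancel₀ _ (sub_ne_zero.mpr huv))
end

section
/- Miura-type transformation from lpKdV to G1: suppose x : ℤ² → ℂ satisfies (x₁₂ - x)(x₁ - x₂) = p - q at a given square with x₁ ≠ x₂, and z satisfies z₁ + z = (x₁-x)² - p and z₂ + z = (x₂-x)² - q as well as z₁₂ + z₁ = (x₁₂-x₁)² - q and z₁₂ + z₂ = (x₁₂-x₂)² - p. Then z₁₂ = z + (p-q)·(z₂ - z₁)/(u - v)² where u = x₁ - x and v = x₂ - x. -/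
/-! Put `u = x₁ - x`, `v = x₂ - x`, `w = x₁₂ - x`. The edge equations along the path
`x → x₁ → x₁₂` give `z₁₂ - z = w² - 2uw + (p - q)`, and the two edges at `x` give
`z₂ - z₁ = v² - u² + (p - q)`. The lattice equation says `w = (p - q)/(u - v)`, and substituting
it turns `w² - 2uw + (p - q)` into `(p - q)(v² - u² + (p - q))/(u - v)²`. -/

theorem sq_sub_two_mul_add_eq_div_sq_of_mul_sub_eq {K : Type*} [Field K] {p q u v w : K}
    (huv : u - v ≠ 0) (hw : w * (u - v) = p - q) :
    w ^ 2 - 2 * u * w + (p - q) = (p - q) * (v ^ 2 - u ^ 2 + (p - q)) / (u - v) ^ 2 := by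
  rw [eq_div_iff (pow_ne_zero 2 huv)]
  linear_combination ((p - q) + w * (u - v) - 2 * u * (u - v)) * hw

theorem miura_lpKdV_to_G1_general (p q x x₁ x₂ x₁₂ z z₁ z₂ z₁₂ : ℂ)
    (hKdV : (x₁₂ - x) * (x₁ - x₂) = p - q) (hx : x₁ ≠ x₂)
    (h1 : z₁ + z = (x₁ - x) ^ 2 - p) (h2 : z₂ + z = (x₂ - x) ^ 2 - q)
    (h3 : z₁₂ + z₁ = (x₁₂ - x₁) ^ 2 - q)
    (u v : ℂ) (hu : u = x₁ - x) (hv : v = x₂ - x) :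
    z₁₂ = z + (p - q) * (z₂ - z₁) / (u - v) ^ 2 := by
  have huv : u - v ≠ 0 := by rw [hu, hv, sub_sub_sub_cancel_right]; exact sub_ne_zero.mpr hx
  have hw : (x₁₂ - x) * (u - v) = p - q := by rw [hu, hv, sub_sub_sub_cancel_right]; exact hKdV
  have hdiag : z₁₂ - z = (x₁₂ - x) ^ 2 - 2 * u * (x₁₂ - x) + (p - q) := by
    rw [hu]; linear_combination h3 - h1
  have hedge : z₂ - z₁ = v ^ 2 - u ^ 2 + (p - q) := by
    rw [hu, hv]; linear_combination h2 - h1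
  rw [hedge, ← sq_sub_two_mul_add_eq_div_sq_of_mul_sub_eq huv hw, ← hdiag]
  ring

theorem miura_lpKdV_to_G1 (p q x x₁ x₂ x₁₂ z z₁ z₂ z₁₂ : ℂ)
    (hKdV : (x₁₂ - x) * (x₁ - x₂) = p - q) (hx : x₁ ≠ x₂)
    (h1 : z₁ + z = (x₁ - x) ^ 2 - p) (h2 : z₂ + z = (x₂ - x) ^ 2 - q)
    (h3 : z₁₂ + z₁ = (x₁₂ - x₁) ^ 2 - q) (h4 : z₁₂ + z₂ = (x₁₂ - x₂) ^ 2 - p)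
    (u v : ℂ) (hu : u = x₁ - x) (hv : v = x₂ - x) :
    z₁₂ = z + (p - q) * (z₂ - z₁) / (u - v) ^ 2 :=
  miura_lpKdV_to_G1_general p q x x₁ x₂ x₁₂ z z₁ z₂ z₁₂ hKdV hx h1 h2 h3 u v hu hv
end

section
/- Miura-type transformation from lpKdV to F1: suppose x : ℤ² → ℂ satisfies (x₁₂ - x)(x₁ - x₂) = p - q at a given square with x₁ ≠ x₂, and f satisfies f₁ - f = (x₁-x)³ - 3p(x₁-x), f₂ - f = (x₂-x)³ - 3q(x₂-x), f₁₂ - f₁ = (x₁₂-x₁)³ - 3q(x₁₂-x₁), f₁₂ - f₂ = (x₁₂-x₂)³ - 3p(x₁₂-x₂). Then f₁₂ = f + (p-q)·[ v - u + (f₁ - f₂)/(u-v)² + (p-q)²/(u-v)³ ] where u = x₁ - x and v = x₂ - x. -/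
/-! Put `w = x₁₂ - x`, so the lattice equation reads `w (u - v) = p - q`. Going round the square
through `x₁`, the increment `f₁₂ - f` is `(u³ - 3pu) + ((w - u)³ - 3q(w - u))`; eliminating
`p = q + w (u - v)` turns the claim into a polynomial identity in `q, u, v, w`. -/

lemma cubic_flux_add_eq_of_mul_sub_eq {K : Type*} [Field K] {p q u v w : K}
    (huv : u - v ≠ 0) (hw : w * (u - v) = p - q) :
    u ^ 3 - 3 * p * u + ((w - u) ^ 3 - 3 * q * (w - u)) =
      (p - q) * (v - u + (u ^ 3 - 3 * p * u - (v ^ 3 - 3 * q * v)) / (u - v) ^ 2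
        + (p - q) ^ 2 / (u - v) ^ 3) := by
  obtain rfl : p = w * (u - v) + q := (sub_eq_iff_eq_add.mp hw.symm)
  field_simp
  ring

theorem miura_lpKdV_to_F1_general (p q x x₁ x₂ x₁₂ f f₁ f₂ f₁₂ : ℂ)
    (hKdV : (x₁₂ - x) * (x₁ - x₂) = p - q) (hx : x₁ ≠ x₂)
    (h1 : f₁ - f = (x₁ - x) ^ 3 - 3 * p * (x₁ - x))
    (h2 : f₂ - f = (x₂ - x) ^ 3 - 3 * q * (x₂ - x))
    (h3 : f₁₂ - f₁ = (x₁₂ - x₁) ^ 3 - 3 * q * (x₁₂ - x₁))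
    (u v : ℂ) (hu : u = x₁ - x) (hv : v = x₂ - x) :
    f₁₂ = f + (p - q) * (v - u + (f₁ - f₂) / (u - v) ^ 2 + (p - q) ^ 2 / (u - v) ^ 3) := by
  have hd : u - v = x₁ - x₂ := by rw [hu, hv, sub_sub_sub_cancel_right]
  have hf : f₁ - f₂ = u ^ 3 - 3 * p * u - (v ^ 3 - 3 * q * v) := by
    rw [hu, hv]; linear_combination h1 - h2
  have huv : u - v ≠ 0 := by rwa [hd, sub_ne_zero]
  rw [hf, ← cubic_flux_add_eq_of_mul_sub_eq huv (hd ▸ hKdV), hu]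
  linear_combination h1 + h3

theorem miura_lpKdV_to_F1 (p q x x₁ x₂ x₁₂ f f₁ f₂ f₁₂ : ℂ)
    (hKdV : (x₁₂ - x) * (x₁ - x₂) = p - q) (hx : x₁ ≠ x₂)
    (h1 : f₁ - f = (x₁ - x) ^ 3 - 3 * p * (x₁ - x))
    (h2 : f₂ - f = (x₂ - x) ^ 3 - 3 * q * (x₂ - x))
    (h3 : f₁₂ - f₁ = (x₁₂ - x₁) ^ 3 - 3 * q * (x₁₂ - x₁))
    (h4 : f₁₂ - f₂ = (x₁₂ - x₂) ^ 3 - 3 * p * (x₁₂ - x₂))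
    (u v : ℂ) (hu : u = x₁ - x) (hv : v = x₂ - x) :
    f₁₂ = f + (p - q) * (v - u + (f₁ - f₂) / (u - v) ^ 2 + (p - q) ^ 2 / (u - v) ^ 3) :=
  miura_lpKdV_to_F1_general p q x x₁ x₂ x₁₂ f f₁ f₂ f₁₂ hKdV hx h1 h2 h3 u v hu hv
end

section
/- The map F_IV is involutive: let p, q, u, v ∈ ℂ with u ≠ v, u ≠ 0, v ≠ 0, and define U = v·(1 + (p-q)/(u-v)) and V = u·(1 + (p-q)/(u-v)). Assume U ≠ V. Then V·(1 + (p-q)/(U-V)) = u and U·(1 + (p-q)/(U-V)) = v. -/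
/-!
Write `s = 1 + (p - q)/(u - v)`, so that `(U, V) = s • (v, u)`. Then `U - V = -(u - v) s` and
`p - q = (s - 1)(u - v)`, hence the multiplier of the second step is
`1 + (p - q)/(U - V) = 1 - (s - 1)/s = s⁻¹`, which undoes the first step.
-/

theorem one_add_div_neg_mul_eq_inv {K : Type*} [Field K] {a d : K} (hd : d ≠ 0)
    (hs : 1 + a / d ≠ 0) : 1 + a / (-d * (1 + a / d)) = (1 + a / d)⁻¹ := by
  rw [one_add_div hd] at hs ⊢
  have hda : d + a ≠ 0 := (div_ne_zero_iff.mp hs).1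
  field_simp
  ring

theorem FIV_involutive_general (p q u v : ℂ) (huv : u ≠ v)
    (U V : ℂ) (hU : U = v * (1 + (p - q) / (u - v))) (hV : V = u * (1 + (p - q) / (u - v)))
    (hUV : U ≠ V) :
    V * (1 + (p - q) / (U - V)) = u ∧ U * (1 + (p - q) / (U - V)) = v := by
  set s := 1 + (p - q) / (u - v)
  have hs : s ≠ 0 := by
    intro hs0
    exact hUV (by rw [hU, hV, hs0, mul_zero, mul_zero])
  have hUV_sub : U - V = -(u - v) * s := by rw [hU, hV]; ring
  have hinv : 1 + (p - q) / (U - V) = s⁻¹ := by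
    rw [hUV_sub]
    exact one_add_div_neg_mul_eq_inv (sub_ne_zero.mpr huv) hs
  rw [hinv, hU, hV, mul_inv_cancel_right₀ hs, mul_inv_cancel_right₀ hs]
  exact ⟨rfl, rfl⟩

theorem FIV_involutive (p q u v : ℂ) (huv : u ≠ v) (hu : u ≠ 0) (hv : v ≠ 0)
    (U V : ℂ) (hU : U = v * (1 + (p - q) / (u - v))) (hV : V = u * (1 + (p - q) / (u - v)))
    (hUV : U ≠ V) :
    V * (1 + (p - q) / (U - V)) = u ∧ U * (1 + (p - q) / (U - V)) = v :=
  FIV_involutive_general p q u v huv U V hU hV hUV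
end

section
/- The multiplicative substitution links lpKdV to F_IV: suppose x, x₁, x₂, x₁₂ ∈ ℂ satisfy (x₁₂ - x)(x₁ - x₂) = p - q, with x ≠ 0, x₁ ≠ x₂, and x(x₁ - x₂) ≠ 0. Set u = x₁·x, v = x₂·x, u₂ = x₁₂·x₂, v₁ = x₁₂·x₁. Then u ≠ v and u₂ = v·(1 + (p-q)/(u-v)), v₁ = u·(1 + (p-q)/(u-v)). -/
/-! From the lpKdV relation, `x₁₂ = x + (p - q) / (x₁ - x₂)`; multiplying by `y` and factoring out
`x` gives `x₁₂ * y = (y * x) * (1 + (p - q) / (x₁ * x - x₂ * x))`. Taking `y = x₂` and `y = x₁`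
yields the two F_IV relations for the edge variables `v = x₂ * x` and `u = x₁ * x`. -/

theorem mul_eq_mul_one_add_div_of_lpKdV {K : Type*} [Field K] {p q x x₁ x₂ x₁₂ : K}
    (hKdV : (x₁₂ - x) * (x₁ - x₂) = p - q) (hxx : x * (x₁ - x₂) ≠ 0) (y : K) :
    x₁₂ * y = y * x * (1 + (p - q) / (x₁ * x - x₂ * x)) := by
  have huv : x₁ * x - x₂ * x = x * (x₁ - x₂) := by ring
  obtain ⟨hx0, hx⟩ := mul_ne_zero_iff.mp hxx
  rw [huv]
  field_simp [sub_ne_zero.mp hx]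
  linear_combination y * hKdV

theorem mult_subst_lpKdV_to_FIV_general (p q x x₁ x₂ x₁₂ : ℂ)
    (hKdV : (x₁₂ - x) * (x₁ - x₂) = p - q)
    (hxx : x * (x₁ - x₂) ≠ 0)
    (u v u₂ v₁ : ℂ) (hu : u = x₁ * x) (hv : v = x₂ * x)
    (hu₂ : u₂ = x₁₂ * x₂) (hv₁ : v₁ = x₁₂ * x₁) :
    u ≠ v ∧ u₂ = v * (1 + (p - q) / (u - v)) ∧ v₁ = u * (1 + (p - q) / (u - v)) := by
  subst hu hv hu₂ hv₁
  refine ⟨fun huv => hxx ?_, mul_eq_mul_one_add_div_of_lpKdV hKdV hxx x₂,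
    mul_eq_mul_one_add_div_of_lpKdV hKdV hxx x₁⟩
  linear_combination huv

theorem mult_subst_lpKdV_to_FIV (p q x x₁ x₂ x₁₂ : ℂ)
    (hKdV : (x₁₂ - x) * (x₁ - x₂) = p - q) (hx0 : x ≠ 0) (hx : x₁ ≠ x₂)
    (hxx : x * (x₁ - x₂) ≠ 0)
    (u v u₂ v₁ : ℂ) (hu : u = x₁ * x) (hv : v = x₂ * x)
    (hu₂ : u₂ = x₁₂ * x₂) (hv₁ : v₁ = x₁₂ * x₁) :
    u ≠ v ∧ u₂ = v * (1 + (p - q) / (u - v)) ∧ v₁ = u * (1 + (p - q) / (u - v)) :=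
  mult_subst_lpKdV_to_FIV_general p q x x₁ x₂ x₁₂ hKdV hxx u v u₂ v₁ hu hv hu₂ hv₁
end

section
/- 3D consistency of the idea system I_V on a cube: let u¹, u², u³ ∈ ℂ be edge values and p¹, p², p³ ∈ ℂ parameters with all three differences uⁱ - uʲ (i ≠ j) nonzero, and define the shifted values by uⁱ_j = (pⁱ - pʲ)/(uⁱ - uʲ) - uʲ for i ≠ j. Assume additionally the shifted differences uⁱ_k - uʲ_k are nonzero. Then the doubly shifted values are consistent: uⁱ_{jk} = uⁱ_{kj} for all distinct i, j, k, where uⁱ_{jk} = (pⁱ - pʲ)/(uⁱ_k - uʲ_k) - uʲ_k. -/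
/-!
Write `a, b, c` for `uⁱ, uʲ, uᵏ` and `P, Q, R` for `pⁱ, pʲ, pᵏ`. The shifted difference is
`uⁱ_k - uʲ_k = Δ / ((a - c) (b - c))` with `Δ = P (b - c) + Q (c - a) + R (a - b)`, which is
alternating in the three directions. Hence
`uⁱ_{jk} = (P - Q) (a - c) (b - c) / Δ - (Q - R) / (b - c) + c`,
and since `(P - Q) (a - c) - (P - R) (a - b) = Δ`, exchanging `j` and `k` changes this by
`(b - c) + c - b = 0`.
-/

variable {K : Type*} [Field K]

/-- `ivShift pⁱ pʲ uⁱ uʲ` is `uⁱ_j`. -/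
def ivShift (pi pj ui uj : K) : K := (pi - pj) / (ui - uj) - uj

def ivDelta (P Q R a b c : K) : K := P * (b - c) + Q * (c - a) + R * (a - b)

theorem ivShift_sub_ivShift {P Q R a b c : K} (hac : a ≠ c) (hbc : b ≠ c) :
    ivShift P R a c - ivShift Q R b c = ivDelta P Q R a b c / ((a - c) * (b - c)) := by
  have hac' : a - c ≠ 0 := sub_ne_zero.mpr hac
  have hbc' : b - c ≠ 0 := sub_ne_zero.mpr hbc
  unfold ivShift ivDelta
  field_simp
  ring

theorem ivShift_ivShift {P Q R a b c : K} (hac : a ≠ c) (hbc : b ≠ c) :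
    ivShift P Q (ivShift P R a c) (ivShift Q R b c) =
      (P - Q) * ((a - c) * (b - c)) / ivDelta P Q R a b c - (Q - R) / (b - c) + c := by
  rw [ivShift, ivShift_sub_ivShift hac hbc, div_div_eq_mul_div, ivShift]
  ring

theorem ivShift_ivShift_comm {P Q R a b c : K} (hab : a ≠ b) (hac : a ≠ c) (hbc : b ≠ c)
    (hshift : ivShift P R a c ≠ ivShift Q R b c) :
    ivShift P Q (ivShift P R a c) (ivShift Q R b c) =
      ivShift P R (ivShift P Q a b) (ivShift R Q c b) := by
  have hΔ : ivDelta P Q R a b c ≠ 0 := by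
    intro h0
    apply sub_ne_zero.mpr hshift
    rw [ivShift_sub_ivShift hac hbc, h0, zero_div]
  have hswap : ivDelta P R Q a c b = -ivDelta P Q R a b c := by unfold ivDelta; ring
  have hbc' : b - c ≠ 0 := sub_ne_zero.mpr hbc
  have hcb' : c - b ≠ 0 := sub_ne_zero.mpr hbc.symm
  rw [ivShift_ivShift hac hbc, ivShift_ivShift hab hbc.symm, hswap]
  field_simp
  unfold ivDelta
  ring

theorem IV_3D_consistency_general (p1 p2 p3 u1 u2 u3 : ℂ)
    (h12 : u1 ≠ u2) (h13 : u1 ≠ u3) (h23 : u2 ≠ u3)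
    (u1₂ u1₃ u2₁ u2₃ u3₁ u3₂ : ℂ)
    (hu1₂ : u1₂ = (p1 - p2) / (u1 - u2) - u2)
    (hu2₁ : u2₁ = (p2 - p1) / (u2 - u1) - u1)
    (hu1₃ : u1₃ = (p1 - p3) / (u1 - u3) - u3)
    (hu3₁ : u3₁ = (p3 - p1) / (u3 - u1) - u1)
    (hu2₃ : u2₃ = (p2 - p3) / (u2 - u3) - u3)
    (hu3₂ : u3₂ = (p3 - p2) / (u3 - u2) - u2)
    (h12s : u1₃ ≠ u2₃) (h23s : u2₁ ≠ u3₁) :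
    (p1 - p2) / (u1₃ - u2₃) - u2₃ = (p1 - p3) / (u1₂ - u3₂) - u3₂ ∧
    (p2 - p1) / (u2₃ - u1₃) - u1₃ = (p2 - p3) / (u2₁ - u3₁) - u3₁ ∧
    (p3 - p1) / (u3₂ - u1₂) - u1₂ = (p3 - p2) / (u3₁ - u2₁) - u2₁ := by
  subst hu1₂ hu2₁ hu1₃ hu3₁ hu2₃ hu3₂
  exact ⟨ivShift_ivShift_comm h12 h13 h23 h12s,
    ivShift_ivShift_comm h12.symm h23 h13 h12s.symm,
    (ivShift_ivShift_comm h23.symm h13.symm h12.symm h23s.symm).symm⟩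

theorem IV_3D_consistency (p1 p2 p3 u1 u2 u3 : ℂ)
    (h12 : u1 ≠ u2) (h13 : u1 ≠ u3) (h23 : u2 ≠ u3)
    (u1₂ u1₃ u2₁ u2₃ u3₁ u3₂ : ℂ)
    (hu1₂ : u1₂ = (p1 - p2) / (u1 - u2) - u2)
    (hu2₁ : u2₁ = (p2 - p1) / (u2 - u1) - u1)
    (hu1₃ : u1₃ = (p1 - p3) / (u1 - u3) - u3)
    (hu3₁ : u3₁ = (p3 - p1) / (u3 - u1) - u1)
    (hu2₃ : u2₃ = (p2 - p3) / (u2 - u3) - u3)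
    (hu3₂ : u3₂ = (p3 - p2) / (u3 - u2) - u2)
    (h12s : u1₃ ≠ u2₃) (h13s : u1₂ ≠ u3₂) (h23s : u2₁ ≠ u3₁) :
    (p1 - p2) / (u1₃ - u2₃) - u2₃ = (p1 - p3) / (u1₂ - u3₂) - u3₂ ∧
    (p2 - p1) / (u2₃ - u1₃) - u1₃ = (p2 - p3) / (u2₁ - u3₁) - u3₁ ∧
    (p3 - p1) / (u3₂ - u1₂) - u1₂ = (p3 - p2) / (u3₁ - u2₁) - u2₁ :=
  IV_3D_consistency_general p1 p2 p3 u1 u2 u3 h12 h13 h23 u1₂ u1₃ u2₁ u2₃ u3₁ u3₂ hu1₂ hu2₁ hu1₃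
    hu3₁ hu2₃ hu3₂ h12s h23s
end

section
/- Tetrahedron-type formula for the z-potential of G1: let u¹, u², u³ ∈ ℂ and p¹, p², p³ ∈ ℂ with D := p¹(u²-u³) + p²(u³-u¹) + p³(u¹-u²) ≠ 0, and suppose all quantities below are defined via the I_V system (uⁱ_j + uʲ = (pⁱ-pʲ)/(uⁱ-uʲ)) and the potential relations (uⁱ)² - pⁱ = z_i + z on every edge of the unit cube (with compatible shifts). Then z₁₂₃ + z = [p¹u¹(u²-u³) + p²u²(u³-u¹) + p³u³(u¹-u²)]²/D² + [u¹(p²-p³)(p²+p³-p¹) + u²(p³-p¹)(p¹+p³-p²) + u³(p¹-p²)(p¹+p²-p³)]/D. -/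
/-!
Summing the potential relations with alternating signs along the path `z → z₃ → z₂₃ → z₁₂₃`
gives `z₁₂₃ + z = (u¹₂₃)² - (u²₃)² + (u³)² - p¹ + p² - p³`. The `I_V` relations on the
faces through the vertex `3` express `u¹₃ - u²₃`, hence `u¹₂₃ + u²₃`, rationally in the initial data,
and what is left is an identity of rational functions.
-/

section IV

variable {K : Type*} [Field K]

lemma iV_shift_sub_shift {p1 p2 p3 u1 u2 u3 u1₃ u2₃ : K} (h13 : u1 ≠ u3) (h23 : u2 ≠ u3)
    (hu1₃ : u1₃ + u3 = (p1 - p3) / (u1 - u3)) (hu2₃ : u2₃ + u3 = (p2 - p3) / (u2 - u3)) :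
    u1₃ - u2₃ =
      (p1 * (u2 - u3) + p2 * (u3 - u1) + p3 * (u1 - u2)) / ((u1 - u3) * (u2 - u3)) := by
  have hd13 : u1 - u3 ≠ 0 := sub_ne_zero.mpr h13
  have hd23 : u2 - u3 ≠ 0 := sub_ne_zero.mpr h23
  rw [eq_sub_of_add_eq hu1₃, eq_sub_of_add_eq hu2₃]
  field_simp
  ring

lemma iV_double_shift_add {p1 p2 p3 u1 u2 u3 u1₃ u2₃ u1₂₃ : K} (h13 : u1 ≠ u3) (h23 : u2 ≠ u3)
    (hu1₃ : u1₃ + u3 = (p1 - p3) / (u1 - u3)) (hu2₃ : u2₃ + u3 = (p2 - p3) / (u2 - u3))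
    (hu1₂₃ : u1₂₃ + u2₃ = (p1 - p2) / (u1₃ - u2₃)) :
    u1₂₃ + u2₃ =
      (p1 - p2) * ((u1 - u3) * (u2 - u3)) /
        (p1 * (u2 - u3) + p2 * (u3 - u1) + p3 * (u1 - u2)) := by
  rw [hu1₂₃, iV_shift_sub_shift h13 h23 hu1₃ hu2₃, div_div_eq_mul_div]

lemma tetrahedron_rational_identity {p1 p2 p3 u1 u2 u3 s w : K} (h13 : u1 ≠ u3) (h23 : u2 ≠ u3)
    (hD : p1 * (u2 - u3) + p2 * (u3 - u1) + p3 * (u1 - u2) ≠ 0)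
    (hs : s = (p1 - p2) * ((u1 - u3) * (u2 - u3)) /
      (p1 * (u2 - u3) + p2 * (u3 - u1) + p3 * (u1 - u2)))
    (hw : w = (p2 - p3) / (u2 - u3) - u3) :
    s * (s - 2 * w) + u3 ^ 2 - p1 + p2 - p3 =
      (p1 * u1 * (u2 - u3) + p2 * u2 * (u3 - u1) + p3 * u3 * (u1 - u2)) ^ 2 /
        (p1 * (u2 - u3) + p2 * (u3 - u1) + p3 * (u1 - u2)) ^ 2 +
      (u1 * (p2 - p3) * (p2 + p3 - p1) + u2 * (p3 - p1) * (p1 + p3 - p2) +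
          u3 * (p1 - p2) * (p1 + p2 - p3)) /
        (p1 * (u2 - u3) + p2 * (u3 - u1) + p3 * (u1 - u2)) := by
  have hd13 : u1 - u3 ≠ 0 := sub_ne_zero.mpr h13
  have hd23 : u2 - u3 ≠ 0 := sub_ne_zero.mpr h23
  subst hs hw
  field_simp
  ring

end IV

theorem G1_z_tetrahedron_formula_general (p1 p2 p3 u1 u2 u3 : ℂ)
    (h13 : u1 ≠ u3) (h23 : u2 ≠ u3)
    (hD : p1 * (u2 - u3) + p2 * (u3 - u1) + p3 * (u1 - u2) ≠ 0)
    (u1₃ u2₃ u1₂₃ : ℂ)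
    -- I_V system on the bottom faces
    (hu1₃ : u1₃ + u3 = (p1 - p3) / (u1 - u3))
    (hu2₃ : u2₃ + u3 = (p2 - p3) / (u2 - u3))
    -- I_V system on the shifted faces
    (hu1₂₃ : u1₂₃ + u2₃ = (p1 - p2) / (u1₃ - u2₃))
    (z z3 z23 z123 : ℂ)
    -- potential relations on all twelve edges of the unit cube
    (hz123 : u1₂₃ ^ 2 - p1 = z123 + z23)
    (hz23 : u2₃ ^ 2 - p2 = z23 + z3)
    (hz3 : u3 ^ 2 - p3 = z3 + z) :
    z123 + z =
      (p1 * u1 * (u2 - u3) + p2 * u2 * (u3 - u1) + p3 * u3 * (u1 - u2)) ^ 2 /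
        (p1 * (u2 - u3) + p2 * (u3 - u1) + p3 * (u1 - u2)) ^ 2 +
      (u1 * (p2 - p3) * (p2 + p3 - p1) + u2 * (p3 - p1) * (p1 + p3 - p2) +
          u3 * (p1 - p2) * (p1 + p2 - p3)) /
        (p1 * (u2 - u3) + p2 * (u3 - u1) + p3 * (u1 - u2)) := by
  have hpath : z123 + z = (u1₂₃ + u2₃) * (u1₂₃ + u2₃ - 2 * u2₃) + u3 ^ 2 - p1 + p2 - p3 := by
    linear_combination -hz123 + hz23 - hz3
  rw [hpath]
  exact tetrahedron_rational_identity h13 h23 hD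
    (iV_double_shift_add h13 h23 hu1₃ hu2₃ hu1₂₃) (eq_sub_of_add_eq hu2₃)

theorem G1_z_tetrahedron_formula (p1 p2 p3 u1 u2 u3 : ℂ)
    (h12 : u1 ≠ u2) (h13 : u1 ≠ u3) (h23 : u2 ≠ u3)
    (hD : p1 * (u2 - u3) + p2 * (u3 - u1) + p3 * (u1 - u2) ≠ 0)
    (u1₂ u1₃ u2₁ u2₃ u3₁ u3₂ u1₂₃ u2₁₃ u3₁₂ : ℂ)
    -- I_V system on the bottom faces
    (hu1₂ : u1₂ + u2 = (p1 - p2) / (u1 - u2))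
    (hu2₁ : u2₁ + u1 = (p2 - p1) / (u2 - u1))
    (hu1₃ : u1₃ + u3 = (p1 - p3) / (u1 - u3))
    (hu3₁ : u3₁ + u1 = (p3 - p1) / (u3 - u1))
    (hu2₃ : u2₃ + u3 = (p2 - p3) / (u2 - u3))
    (hu3₂ : u3₂ + u2 = (p3 - p2) / (u3 - u2))
    (h12s : u1₃ ≠ u2₃) (h13s : u1₂ ≠ u3₂) (h23s : u2₁ ≠ u3₁)
    -- I_V system on the shifted faces
    (hu1₂₃ : u1₂₃ + u2₃ = (p1 - p2) / (u1₃ - u2₃))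
    (hu1₃₂ : u1₂₃ + u3₂ = (p1 - p3) / (u1₂ - u3₂))
    (hu2₁₃ : u2₁₃ + u1₃ = (p2 - p1) / (u2₃ - u1₃))
    (hu2₃₁ : u2₁₃ + u3₁ = (p2 - p3) / (u2₁ - u3₁))
    (hu3₁₂ : u3₁₂ + u1₂ = (p3 - p1) / (u3₂ - u1₂))
    (hu3₂₁ : u3₁₂ + u2₁ = (p3 - p2) / (u3₁ - u2₁))
    (z z1 z2 z3 z12 z13 z23 z123 : ℂ)
    -- potential relations on all twelve edges of the unit cube
    (hz1 : u1 ^ 2 - p1 = z1 + z) (hz12 : u1₂ ^ 2 - p1 = z12 + z2)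
    (hz13 : u1₃ ^ 2 - p1 = z13 + z3) (hz123 : u1₂₃ ^ 2 - p1 = z123 + z23)
    (hz2 : u2 ^ 2 - p2 = z2 + z) (hz21 : u2₁ ^ 2 - p2 = z12 + z1)
    (hz23 : u2₃ ^ 2 - p2 = z23 + z3) (hz213 : u2₁₃ ^ 2 - p2 = z123 + z13)
    (hz3 : u3 ^ 2 - p3 = z3 + z) (hz31 : u3₁ ^ 2 - p3 = z13 + z1)
    (hz32 : u3₂ ^ 2 - p3 = z23 + z2) (hz312 : u3₁₂ ^ 2 - p3 = z123 + z12) :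
    z123 + z =
      (p1 * u1 * (u2 - u3) + p2 * u2 * (u3 - u1) + p3 * u3 * (u1 - u2)) ^ 2 /
        (p1 * (u2 - u3) + p2 * (u3 - u1) + p3 * (u1 - u2)) ^ 2 +
      (u1 * (p2 - p3) * (p2 + p3 - p1) + u2 * (p3 - p1) * (p1 + p3 - p2) +
          u3 * (p1 - p2) * (p1 + p2 - p3)) /
        (p1 * (u2 - u3) + p2 * (u3 - u1) + p3 * (u1 - u2)) :=
  G1_z_tetrahedron_formula_general p1 p2 p3 u1 u2 u3 h13 h23 hD u1₃ u2₃ u1₂₃ hu1₃ hu2₃ hu1₂₃ z z3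
    z23 z123 hz123 hz23 hz3
end
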